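/- arXiv:1904.09878 — 4 statements merged into one kernel-verified Lean document; each statement's English description precedes it below -/
import Mathlib

section
/- For any sequence of positive integers p_1,...,p_t, the function F_{p_1,...,p_t}(n) = \sum_{0 \le k_1 < k_2 < \dots < k_t \le n-1} k_1^{p_1} k_2^{p_2} \cdots k_t^{p_t} agrees with a polynomial in n of degree p_1 + p_2 + \dots + p_t + t. -/
/-!
Splitting off the largest index gives
`F_{p₁,…,p_{t+1}}(n) = ∑_{m < n} m ^ p_{t+1} · F_{p₁,…,p_t}(m)`.
By Faulhaber's formula `n ↦ ∑_{k < n} Q(k)` is a polynomial of degree `deg Q + 1` for every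
`Q ∈ ℚ[X]`, so induction on `t` raises the degree by `p_{t+1} + 1` at each step.
-/

open Polynomial Finset

namespace Polynomial

theorem natDegree_bernoulli_le (n : ℕ) : (bernoulli n).natDegree ≤ n :=
  natDegree_le_iff_coeff_eq_zero.mpr fun i hi => by
    simp [coeff_bernoulli, not_le.mpr hi]

theorem coeff_bernoulli_self (n : ℕ) : (bernoulli n).coeff n = 1 := by
  simp [coeff_bernoulli]

noncomputable def faulhaber (d : ℕ) : ℚ[X] :=
  C (d + 1 : ℚ)⁻¹ * (bernoulli (d + 1) - C (_root_.bernoulli (d + 1)))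

theorem eval_faulhaber (d n : ℕ) : (faulhaber d).eval (n : ℚ) = ∑ k ∈ range n, (k : ℚ) ^ d := by
  rw [faulhaber, eval_mul, eval_C, eval_sub, eval_C, ← sum_range_pow_eq_bernoulli_sub,
    inv_mul_cancel_left₀ (by positivity)]

theorem natDegree_faulhaber_le (d : ℕ) : (faulhaber d).natDegree ≤ d + 1 :=
  (natDegree_C_mul_le _ _).trans <|
    (natDegree_sub_le _ _).trans <| max_le (natDegree_bernoulli_le _) (by simp)

theorem coeff_faulhaber_succ (d : ℕ) : (faulhaber d).coeff (d + 1) = (d + 1 : ℚ)⁻¹ := by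
  simp [faulhaber, coeff_bernoulli_self]

theorem exists_eval_eq_sum_range (Q : ℚ[X]) :
    ∃ P : ℚ[X], P.degree = Q.degree + 1 ∧
      ∀ n : ℕ, P.eval (n : ℚ) = ∑ k ∈ range n, Q.eval (k : ℚ) := by
  refine ⟨∑ i ∈ range (Q.natDegree + 1), C (Q.coeff i) * faulhaber i, ?_, fun n => ?_⟩
  · rcases eq_or_ne Q 0 with rfl | hQ
    · simp
    have hlow : ∀ i ∈ range Q.natDegree,
        (C (Q.coeff i) * faulhaber i).coeff (Q.natDegree + 1) = 0 := fun i hi =>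
      coeff_eq_zero_of_natDegree_lt <| (natDegree_C_mul_le _ _).trans_lt <|
        (natDegree_faulhaber_le i).trans_lt (by simpa using hi)
    rw [degree_eq_natDegree hQ, show (Q.natDegree : WithBot ℕ) + 1 = ↑(Q.natDegree + 1) from rfl]
    apply degree_eq_of_le_of_coeff_ne_zero
    · exact degree_le_of_natDegree_le <| natDegree_sum_le_of_forall_le _ _ fun i hi =>
        (natDegree_C_mul_le _ _).trans <|
          (natDegree_faulhaber_le i).trans (by simpa [Nat.lt_succ_iff] using hi)
    · rw [finsetSum_coeff, sum_range_succ, sum_eq_zero hlow, zero_add, coeff_C_mul,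
        coeff_faulhaber_succ]
      exact mul_ne_zero (leadingCoeff_ne_zero.mpr hQ) (by positivity)
  · simp only [eval_finsetSum, eval_mul, eval_C, eval_faulhaber, mul_sum]
    rw [sum_comm]
    simp only [Q.eval_eq_sum_range, mul_comm]

end Polynomial

theorem Fin.strictMono_iff_init_lt_last {α : Type*} [Preorder α] {t : ℕ} {k : Fin (t + 1) → α} :
    StrictMono k ↔ StrictMono (Fin.init k) ∧ ∀ i, Fin.init k i < k (Fin.last t) := by
  refine ⟨fun hk => ⟨hk.comp Fin.strictMono_castSucc, fun i => hk (Fin.castSucc_lt_last i)⟩,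
    fun ⟨hinit, hlast⟩ a b hab => ?_⟩
  induction b using Fin.lastCases with
  | last =>
    induction a using Fin.lastCases with
    | last => exact absurd hab (lt_irrefl _)
    | cast a => exact hlast a
  | cast b =>
    induction a using Fin.lastCases with
    | last => exact absurd hab (Fin.castSucc_lt_last b).not_gt
    | cast a => exact hinit (Fin.castSucc_lt_castSucc_iff.mp hab)

def strictMonoTuples (t n : ℕ) : Finset (Fin t → ℕ) :=
  {k ∈ Fintype.piFinset fun _ => range n | StrictMono k}

theorem mem_strictMonoTuples {t n : ℕ} {k : Fin t → ℕ} :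
    k ∈ strictMonoTuples t n ↔ (∀ i, k i < n) ∧ StrictMono k := by
  simp [strictMonoTuples]

theorem mem_strictMonoTuples_succ {t n : ℕ} {k : Fin (t + 1) → ℕ} :
    k ∈ strictMonoTuples (t + 1) n ↔
      k (Fin.last t) < n ∧ Fin.init k ∈ strictMonoTuples t (k (Fin.last t)) := by
  simp only [mem_strictMonoTuples, Fin.strictMono_iff_init_lt_last, Fin.forall_fin_succ',
    Fin.init]
  constructor
  · rintro ⟨⟨-, hn⟩, hinit, hlast⟩
    exact ⟨hn, hlast, hinit⟩
  · rintro ⟨hn, hlast, hinit⟩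
    exact ⟨⟨fun i => (hlast i).trans hn, hn⟩, hinit, hlast⟩

/-- `F_{p₁,…,p_t}(n)`, summed over tuples in `ℕ` rather than in `Fin n`. -/
def strictMonoPowSum {t : ℕ} (p : Fin t → ℕ) (n : ℕ) : ℚ :=
  ∑ k ∈ strictMonoTuples t n, ∏ i, (k i : ℚ) ^ p i

theorem strictMonoPowSum_zero (p : Fin 0 → ℕ) (n : ℕ) : strictMonoPowSum p n = 1 := by
  have : strictMonoTuples 0 n = {Fin.elim0} := by
    ext k
    simp [mem_strictMonoTuples, Subsingleton.elim k Fin.elim0, Subsingleton.strictMono]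
  simp [strictMonoPowSum, this]

theorem strictMonoPowSum_succ {t : ℕ} (p : Fin (t + 1) → ℕ) (n : ℕ) :
    strictMonoPowSum p n =
      ∑ m ∈ range n, (m : ℚ) ^ p (Fin.last t) * strictMonoPowSum (Fin.init p) m := by
  simp only [strictMonoPowSum, mul_sum, sum_sigma']
  refine sum_nbij' (fun k => ⟨k (Fin.last t), Fin.init k⟩) (fun x => Fin.snoc x.2 x.1)
    ?_ ?_ ?_ ?_ ?_
  · intro k hk
    simpa using mem_strictMonoTuples_succ.mp hk
  · rintro ⟨m, k⟩ hk
    simpa [mem_strictMonoTuples_succ] using hk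
  · intro k _
    exact Fin.snoc_init_self k
  · rintro ⟨m, k⟩ _
    simp
  · intro k _
    rw [Fin.prod_univ_castSucc, mul_comm]
    rfl

theorem sum_strictMono_fin_eq_strictMonoPowSum {t : ℕ} (p : Fin t → ℕ) (n : ℕ) :
    ∑ k ∈ univ.filter (fun k : Fin t → Fin n => ∀ i j, i < j → k i < k j),
      ∏ i, ((k i : ℕ) : ℚ) ^ p i = strictMonoPowSum p n := by
  refine sum_bij (fun k _ i => (k i : ℕ)) ?_ ?_ ?_ (fun _ _ => rfl)
  · intro k hk
    exact mem_strictMonoTuples.mpr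
      ⟨fun i => (k i).isLt, fun i j hij => (mem_filter.mp hk).2 i j hij⟩
  · intro k _ l _ hkl
    exact funext fun i => Fin.ext (congrFun hkl i)
  · intro k hk
    obtain ⟨hlt, hmono⟩ := mem_strictMonoTuples.mp hk
    exact ⟨fun i => ⟨k i, hlt i⟩, mem_filter.mpr ⟨mem_univ _, fun i j hij => hmono hij⟩, rfl⟩

theorem exists_degree_eq_eval_eq_strictMonoPowSum {t : ℕ} (p : Fin t → ℕ) :
    ∃ Q : ℚ[X], Q.degree = ((∑ i, p i) + t : ℕ) ∧
      ∀ n : ℕ, Q.eval (n : ℚ) = strictMonoPowSum p n := by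
  induction t with
  | zero => exact ⟨1, by simp, fun n => by simp [strictMonoPowSum_zero]⟩
  | succ t ih =>
    obtain ⟨Q, hQdeg, hQeval⟩ := ih (Fin.init p)
    obtain ⟨P, hPdeg, hPeval⟩ := exists_eval_eq_sum_range (X ^ p (Fin.last t) * Q)
    refine ⟨P, ?_, fun n => ?_⟩
    · rw [hPdeg, degree_mul, degree_X_pow, hQdeg, Fin.sum_univ_castSucc]
      norm_cast
      simp only [Fin.init]
      ring
    · simp [hPeval, strictMonoPowSum_succ, hQeval]

theorem stmt_1_general (t : ℕ) (p : Fin t → ℕ) :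
    ∃ Q : Polynomial ℚ, Q.degree = ((∑ i, p i) + t : ℕ) ∧
      ∀ n : ℕ, Q.eval (n : ℚ) =
        ∑ k ∈ Finset.univ.filter (fun k : Fin t → Fin n => ∀ i j, i < j → k i < k j),
          ∏ i, ((k i : ℕ) : ℚ) ^ p i := by
  simpa only [sum_strictMono_fin_eq_strictMonoPowSum] using
    exists_degree_eq_eval_eq_strictMonoPowSum p

/-- For positive integers `p 0, …, p (t-1)`, the function
`n ↦ ∑_{0 ≤ k₁ < ⋯ < k_t ≤ n-1} k₁^{p₁} ⋯ k_t^{p_t}` agrees with a polynomial in `n`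
of degree `∑ i, p i + t`. -/
theorem stmt_1 (t : ℕ) (ht : 0 < t) (p : Fin t → ℕ) (hp : ∀ i, 0 < p i) :
    ∃ Q : Polynomial ℚ, Q.degree = ((∑ i, p i) + t : ℕ) ∧
      ∀ n : ℕ, Q.eval (n : ℚ) =
        ∑ k ∈ Finset.univ.filter (fun k : Fin t → Fin n => ∀ i j, i < j → k i < k j),
          ∏ i, ((k i : ℕ) : ℚ) ^ p i :=
  stmt_1_general t p
end

section
/- Let G be a directed acyclic graph on a finite set V and P a composition of V. Define C(G,P) to be the set of compositions Q of V refining P such that for every directed edge (v,v') of G, the index of the part of Q containing v is strictly less than the index of the part containing v'. Then \sum_{Q \in C(G,P)} (-1)^{l(Q)} equals 0 if there is an edge (v,v') of G with the part-index of v' in P strictly less than that of v, and equals (-1)^{|V|} otherwise. -/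
/-!
A composition `Q` of `V` refines `P` exactly when `P(v) < P(w)` forces `Q(v) < Q(w)`. Hence, if
some edge of `G` goes backwards in `P` no refinement respects `G`, and otherwise the refinements
of `P` respecting `G` are the compositions of `V` respecting `G ∪ {(v, w) | P(v) < P(w)}`, which
is still acyclic. For an acyclic `G` on `S`, the first block of a `G`-respecting composition of
`S` is a nonempty set `A` of sources of `G` and the rest is a respecting composition of `S \ A`,
so by induction the signed count is `∑_{∅ ≠ A ⊆ sources} -(-1)^(|S| - |A|) = (-1)^|S|`: the
sources form a nonempty set `M` and `∑_{A ⊆ M} (-1)^|A| = 0`.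
-/

/-- `P` is a composition of the finite set `I`: a list of nonempty pairwise disjoint
finsets whose union is `I`. -/
def IsComp {α : Type*} [DecidableEq α] (I : Finset α) (P : List (Finset α)) : Prop :=
  (∀ p ∈ P, p.Nonempty) ∧ P.Pairwise Disjoint ∧ P.foldr (· ∪ ·) ∅ = I

/-- `Q` refines `P`: `Q` is the concatenation of compositions of the parts of `P`, in order. -/
def Refines {α : Type*} [DecidableEq α] (Q P : List (Finset α)) : Prop :=
  ∃ Qs : List (List (Finset α)), List.Forall₂ (fun qs p => IsComp p qs) Qs P ∧ Q = Qs.flatten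

/-- The index of the part of the composition `P` containing `v`. -/
def idx {α : Type*} [DecidableEq α] (P : List (Finset α)) (v : α) : ℕ :=
  P.findIdx (fun s => decide (v ∈ s))

open Finset

lemma Relation.TransGen.lt_or_transGen_of_or_lt {α : Type*} {r : α → α → Prop} (f : α → ℕ)
    (hr : ∀ u w, r u w → f u ≤ f w) {u w : α}
    (h : Relation.TransGen (fun u w => r u w ∨ f u < f w) u w) :
    f u < f w ∨ Relation.TransGen r u w := by
  suffices f u ≤ f w ∧ (f u < f w ∨ Relation.TransGen r u w) from this.2
  induction h with
  | single h => exact h.elim (fun h => ⟨hr _ _ h, .inr (.single h)⟩) fun h => ⟨h.le, .inl h⟩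
  | tail _ hbc ih =>
    obtain ⟨hle, ih⟩ := ih
    rcases hbc with hbc | hbc
    · have := hr _ _ hbc
      exact ⟨hle.trans this, ih.imp (fun h => h.trans_le this) fun h => h.tail hbc⟩
    · exact ⟨by omega, .inl (by omega)⟩

section

variable {α : Type*} [DecidableEq α]

lemma List.mem_foldr_union_empty {Q : List (Finset α)} {v : α} :
    v ∈ Q.foldr (· ∪ ·) ∅ ↔ ∃ q ∈ Q, v ∈ q := by
  induction Q with
  | nil => simp
  | cons a Q ih => simp [ih]

lemma idx_cons (A : Finset α) (Q : List (Finset α)) (v : α) :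
    idx (A :: Q) v = if v ∈ A then 0 else idx Q v + 1 := by
  simp [idx, List.findIdx_cons, Bool.cond_eq_ite]

lemma idx_lt_length_iff {Q : List (Finset α)} {v : α} :
    idx Q v < Q.length ↔ ∃ q ∈ Q, v ∈ q := by
  simp [idx]

lemma idx_append_of_mem {Q₁ : List (Finset α)} (Q₂ : List (Finset α)) {v : α}
    (h : ∃ q ∈ Q₁, v ∈ q) : idx (Q₁ ++ Q₂) v = idx Q₁ v := by
  rw [idx, List.findIdx_append]
  exact if_pos (idx_lt_length_iff.mpr h)

lemma idx_append_of_forall_notMem {Q₁ : List (Finset α)} (Q₂ : List (Finset α)) {v : α}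
    (h : ∀ q ∈ Q₁, v ∉ q) : idx (Q₁ ++ Q₂) v = idx Q₂ v + Q₁.length := by
  rw [idx, List.findIdx_append]
  exact if_neg (by simpa [idx_lt_length_iff] using h)

lemma isComp_nil_iff {S : Finset α} : IsComp S [] ↔ S = ∅ := by
  simp [IsComp, eq_comm]

lemma isComp_cons_iff {S A : Finset α} {Q : List (Finset α)} :
    IsComp S (A :: Q) ↔ A.Nonempty ∧ A ⊆ S ∧ IsComp (S \ A) Q := by
  have hdisj : (∀ q ∈ Q, Disjoint A q) ↔ Disjoint A (Q.foldr (· ∪ ·) ∅) := by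
    simp only [disjoint_left, List.mem_foldr_union_empty]
    grind
  have hcover : A ∪ Q.foldr (· ∪ ·) ∅ = S ∧ Disjoint A (Q.foldr (· ∪ ·) ∅) ↔
      A ⊆ S ∧ Q.foldr (· ∪ ·) ∅ = S \ A := by
    constructor
    · rintro ⟨rfl, h⟩
      exact ⟨subset_union_left, (union_sdiff_cancel_left h).symm⟩
    · rintro ⟨hAS, h⟩
      exact ⟨h ▸ union_sdiff_of_subset hAS, h ▸ disjoint_sdiff⟩
  simp only [IsComp, List.forall_mem_cons, List.pairwise_cons, List.foldr_cons, hdisj]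
  tauto

namespace IsComp

variable {S : Finset α} {Q : List (Finset α)}

lemma subset_of_mem (hQ : IsComp S Q) {q : Finset α} (hq : q ∈ Q) : q ⊆ S := by
  intro v hv
  rw [← hQ.2.2]
  exact List.mem_foldr_union_empty.mpr ⟨q, hq, hv⟩

lemma idx_lt_length (hQ : IsComp S Q) {v : α} (hv : v ∈ S) : idx Q v < Q.length := by
  rw [← hQ.2.2, List.mem_foldr_union_empty] at hv
  exact idx_lt_length_iff.mpr hv

lemma idx_append_of_mem (hQ : IsComp S Q) (Q₂ : List (Finset α)) {v : α} (hv : v ∈ S) :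
    idx (Q ++ Q₂) v = idx Q v :=
  _root_.idx_append_of_mem Q₂ (idx_lt_length_iff.mp (hQ.idx_lt_length hv))

lemma idx_append_of_notMem (hQ : IsComp S Q) (Q₂ : List (Finset α)) {v : α} (hv : v ∉ S) :
    idx (Q ++ Q₂) v = idx Q₂ v + Q.length :=
  idx_append_of_forall_notMem Q₂ fun _ hq hvq => hv (hQ.subset_of_mem hq hvq)

lemma length_le_card (hQ : IsComp S Q) : Q.length ≤ S.card := by
  induction Q generalizing S with
  | nil => simp
  | cons A Q ih =>
    obtain ⟨hA, hAS, hQ⟩ := isComp_cons_iff.mp hQ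
    have := ih hQ
    rw [card_sdiff_of_subset hAS] at this
    have := card_pos.mpr hA
    have := card_le_card hAS
    simp only [List.length_cons]
    omega

lemma append {A B : Finset α} {Q₁ Q₂ : List (Finset α)} (h₁ : IsComp A Q₁)
    (h₂ : IsComp B Q₂) (hAB : Disjoint A B) : IsComp (A ∪ B) (Q₁ ++ Q₂) := by
  induction Q₁ generalizing A with
  | nil => simpa [isComp_nil_iff.mp h₁] using h₂
  | cons q Q₁ ih =>
    obtain ⟨hq, hqA, h₁⟩ := isComp_cons_iff.mp h₁
    rw [List.cons_append, isComp_cons_iff, union_sdiff_distrib,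
      sdiff_eq_self_of_disjoint (hAB.mono_left hqA).symm]
    exact ⟨hq, hqA.trans subset_union_left, ih h₁ (hAB.mono_left sdiff_subset)⟩

end IsComp

lemma isComp_empty_iff {Q : List (Finset α)} : IsComp ∅ Q ↔ Q = [] := by
  cases Q with
  | nil => simp [isComp_nil_iff]
  | cons A Q =>
    simp only [isComp_cons_iff, subset_empty, reduceCtorEq, iff_false]
    rintro ⟨hA, rfl, -⟩
    simp at hA

lemma setOf_isComp_finite (S : Finset α) : {Q : List (Finset α) | IsComp S Q}.Finite := by
  refine ((List.finite_length_le S.powerset S.card).image (List.map Subtype.val)).subset ?_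
  intro Q hQ
  refine ⟨Q.attach.map fun q => ⟨q.1, mem_powerset.mpr (hQ.subset_of_mem q.2)⟩, ?_, by simp⟩
  simpa using hQ.length_le_card

lemma IsComp.exists_append_eq {S A : Finset α} {Q : List (Finset α)} (hQ : IsComp S Q)
    (hAS : A ⊆ S) (hlt : ∀ v ∈ A, ∀ w ∈ S, w ∉ A → idx Q v < idx Q w) :
    ∃ Q₁ Q₂, Q = Q₁ ++ Q₂ ∧ IsComp A Q₁ ∧ IsComp (S \ A) Q₂ := by
  induction Q generalizing S A with
  | nil =>
    obtain rfl := isComp_nil_iff.mp hQ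
    obtain rfl := subset_empty.mp hAS
    exact ⟨[], [], rfl, hQ, hQ⟩
  | cons B Q ih =>
    obtain ⟨hB, hBS, hQ⟩ := isComp_cons_iff.mp hQ
    obtain rfl | ⟨v₀, hv₀⟩ := A.eq_empty_or_nonempty
    · refine ⟨[], B :: Q, rfl, isComp_nil_iff.mpr rfl, ?_⟩
      simpa [isComp_cons_iff] using ⟨hB, hBS, hQ⟩
    have hBA : B ⊆ A := by
      intro w hwB
      by_contra hwA
      simpa [idx_cons, hwB] using hlt v₀ hv₀ w (hBS hwB) hwA
    have hlt' : ∀ v ∈ A \ B, ∀ w ∈ S \ B, w ∉ A \ B → idx Q v < idx Q w := by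
      intro v hv w hw hwA
      rw [mem_sdiff] at hv hw
      have := hlt v hv.1 w hw.1 (by simpa [hw.2] using hwA)
      simpa [idx_cons, hv.2, hw.2] using this
    obtain ⟨Q₁, Q₂, rfl, h₁, h₂⟩ := ih hQ (sdiff_subset_sdiff hAS subset_rfl) hlt'
    rw [sdiff_sdiff_sdiff_cancel_right hBA] at h₂
    exact ⟨B :: Q₁, Q₂, rfl, isComp_cons_iff.mpr ⟨hB, hBA, h₁⟩, h₂⟩

lemma refines_nil_iff {Q : List (Finset α)} : Refines Q [] ↔ Q = [] := by
  simp [Refines]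

lemma refines_cons_iff {Q P : List (Finset α)} {A : Finset α} :
    Refines Q (A :: P) ↔ ∃ Q₁ Q₂, IsComp A Q₁ ∧ Refines Q₂ P ∧ Q = Q₁ ++ Q₂ := by
  constructor
  · rintro ⟨_, hQs, rfl⟩
    obtain ⟨Q₁, Qs, h₁, hQs', rfl⟩ := List.forall₂_cons_right_iff.mp hQs
    exact ⟨Q₁, Qs.flatten, h₁, ⟨Qs, hQs', rfl⟩, List.flatten_cons⟩
  · rintro ⟨Q₁, _, h₁, ⟨Qs, hQs, rfl⟩, rfl⟩
    exact ⟨Q₁ :: Qs, List.Forall₂.cons h₁ hQs, List.flatten_cons.symm⟩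

namespace Refines

variable {S : Finset α} {P Q : List (Finset α)}

lemma isComp (hP : IsComp S P) (hQ : Refines Q P) : IsComp S Q := by
  induction P generalizing S Q with
  | nil => rwa [refines_nil_iff.mp hQ]
  | cons A P ih =>
    obtain ⟨-, hAS, hP⟩ := isComp_cons_iff.mp hP
    obtain ⟨Q₁, Q₂, h₁, h₂, rfl⟩ := refines_cons_iff.mp hQ
    simpa [union_sdiff_of_subset hAS] using h₁.append (ih hP h₂) disjoint_sdiff

lemma idx_lt_idx (hP : IsComp S P) (hQ : Refines Q P) {v w : α} (hv : v ∈ S) (hw : w ∈ S)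
    (hlt : idx P v < idx P w) : idx Q v < idx Q w := by
  induction P generalizing S Q with
  | nil => simp [isComp_nil_iff.mp hP] at hv
  | cons A P ih =>
    obtain ⟨-, -, hP⟩ := isComp_cons_iff.mp hP
    obtain ⟨Q₁, Q₂, h₁, h₂, rfl⟩ := refines_cons_iff.mp hQ
    have hwA : w ∉ A := fun hwA => by simp [idx_cons, hwA] at hlt
    rw [h₁.idx_append_of_notMem _ hwA]
    by_cases hvA : v ∈ A
    · rw [h₁.idx_append_of_mem _ hvA]
      have := h₁.idx_lt_length hvA
      omega
    · rw [h₁.idx_append_of_notMem _ hvA]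
      simp only [idx_cons, hvA, hwA, if_false, add_lt_add_iff_right] at hlt
      have := ih hP h₂ (mem_sdiff.mpr ⟨hv, hvA⟩) (mem_sdiff.mpr ⟨hw, hwA⟩) hlt
      omega

end Refines

lemma refines_of_idx_lt_imp {S : Finset α} {P Q : List (Finset α)} (hP : IsComp S P)
    (hQ : IsComp S Q) (hmono : ∀ v ∈ S, ∀ w ∈ S, idx P v < idx P w → idx Q v < idx Q w) :
    Refines Q P := by
  induction P generalizing S Q with
  | nil =>
    obtain rfl := isComp_nil_iff.mp hP
    exact refines_nil_iff.mpr (isComp_empty_iff.mp hQ)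
  | cons A P ih =>
    obtain ⟨-, hAS, hP⟩ := isComp_cons_iff.mp hP
    obtain ⟨Q₁, Q₂, rfl, h₁, h₂⟩ := hQ.exists_append_eq hAS fun v hv w hw hwA =>
      hmono v (hAS hv) w hw (by simp [idx_cons, hv, hwA])
    refine refines_cons_iff.mpr ⟨Q₁, Q₂, h₁, ih hP h₂ fun v hv w hw hlt => ?_, rfl⟩
    rw [mem_sdiff] at hv hw
    have := hmono v hv.1 w hw.1 (by simpa [idx_cons, hv.2, hw.2] using hlt)
    rw [h₁.idx_append_of_notMem _ hv.2, h₁.idx_append_of_notMem _ hw.2] at this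
    omega

lemma refines_iff {S : Finset α} {P Q : List (Finset α)} (hP : IsComp S P) :
    Refines Q P ↔
      IsComp S Q ∧ ∀ v ∈ S, ∀ w ∈ S, idx P v < idx P w → idx Q v < idx Q w :=
  ⟨fun hQ => ⟨hQ.isComp hP, fun _ hv _ hw => hQ.idx_lt_idx hP hv hw⟩,
    fun ⟨hQ, hmono⟩ => refines_of_idx_lt_imp hP hQ hmono⟩

@[simps]
def List.consEmbedding (β : Type*) : (Σ _ : β, List β) ↪ List β where
  toFun x := x.1 :: x.2
  inj' := by
    rintro ⟨a, l⟩ ⟨b, m⟩ h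
    obtain ⟨rfl, rfl⟩ := List.cons.inj h
    rfl

noncomputable def compsRespecting (S : Finset α) (G : Finset (α × α)) :
    Finset (List (Finset α)) :=
  (setOf_isComp_finite S).toFinset.filter fun Q => ∀ p ∈ G, idx Q p.1 < idx Q p.2

@[simp]
lemma mem_compsRespecting {S : Finset α} {G : Finset (α × α)} {Q : List (Finset α)} :
    Q ∈ compsRespecting S G ↔ IsComp S Q ∧ ∀ p ∈ G, idx Q p.1 < idx Q p.2 := by
  simp [compsRespecting]

def sources (S : Finset α) (G : Finset (α × α)) : Finset α :=
  S.filter fun v => ∀ p ∈ G, p.2 ≠ v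

lemma sources_nonempty {S : Finset α} {G : Finset (α × α)} (hS : S.Nonempty)
    (hGS : ∀ p ∈ G, p.1 ∈ S) (hacyc : ∀ v, ¬ Relation.TransGen (fun u w => (u, w) ∈ G) v v) :
    (sources S G).Nonempty := by
  let r : S → S → Prop := fun x y => Relation.TransGen (fun u w => (u, w) ∈ G) x y
  have : IsTrans S r := ⟨fun _ _ _ => Relation.TransGen.trans⟩
  have : Std.Irrefl r := ⟨fun x => hacyc x⟩
  obtain ⟨x, -, hmin⟩ := (Finite.wellFounded_of_trans_of_irrefl r).has_min Set.univ
    ⟨⟨_, hS.choose_spec⟩, trivial⟩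
  refine ⟨x, mem_filter.mpr ⟨x.2, fun p hp hpx => hmin ⟨p.1, hGS p hp⟩ trivial ?_⟩⟩
  exact Relation.TransGen.single (by rw [← hpx]; exact hp)

lemma cons_mem_compsRespecting_iff {S A : Finset α} {G : Finset (α × α)}
    {Q : List (Finset α)} :
    A :: Q ∈ compsRespecting S G ↔ (A.Nonempty ∧ A ⊆ sources S G) ∧
      Q ∈ compsRespecting (S \ A) (G.filter fun p => p.1 ∉ A) := by
  simp only [mem_compsRespecting, isComp_cons_iff]
  constructor
  · rintro ⟨⟨hA, hAS, hQ⟩, hresp⟩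
    have hin : ∀ p ∈ G, p.2 ∉ A := fun p hp h => by simpa [idx_cons, h] using hresp p hp
    refine ⟨⟨hA, fun v hv => mem_filter.mpr ⟨hAS hv, fun p hp h => hin p hp (h ▸ hv)⟩⟩, hQ,
      fun p hp => ?_⟩
    rw [mem_filter] at hp
    simpa [idx_cons, hp.2, hin p hp.1] using hresp p hp.1
  · rintro ⟨⟨hA, hAM⟩, hQ, hresp⟩
    have hin : ∀ p ∈ G, p.2 ∉ A := fun p hp h => (mem_filter.mp (hAM h)).2 p hp rfl
    refine ⟨⟨hA, hAM.trans (filter_subset _ _), hQ⟩, fun p hp => ?_⟩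
    by_cases h1 : p.1 ∈ A
    · simp [idx_cons, h1, hin p hp]
    · simpa [idx_cons, h1, hin p hp] using hresp p (mem_filter.mpr ⟨hp, h1⟩)

lemma compsRespecting_eq_map_sigma {S : Finset α} {G : Finset (α × α)} (hS : S.Nonempty) :
    compsRespecting S G = (((sources S G).powerset.erase ∅).sigma fun A =>
      compsRespecting (S \ A) (G.filter fun p => p.1 ∉ A)).map (List.consEmbedding _) := by
  ext (_ | ⟨A, Q⟩)
  · simp [isComp_nil_iff, hS.ne_empty]
  · rw [cons_mem_compsRespecting_iff]
    simp [nonempty_iff_ne_empty]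

theorem sum_neg_one_pow_length_compsRespecting {S : Finset α} {G : Finset (α × α)}
    (hGS : ∀ p ∈ G, p.1 ∈ S ∧ p.2 ∈ S)
    (hacyc : ∀ v, ¬ Relation.TransGen (fun u w => (u, w) ∈ G) v v) :
    ∑ Q ∈ compsRespecting S G, (-1 : ℤ) ^ Q.length = (-1) ^ S.card := by
  induction S using Finset.strongInduction generalizing G with
  | H S ih =>
    obtain rfl | hS := S.eq_empty_or_nonempty
    · obtain rfl : G = ∅ := eq_empty_of_forall_notMem fun p hp => by simpa using (hGS p hp).1
      have : compsRespecting ∅ (∅ : Finset (α × α)) = {[]} := by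
        ext Q
        simp [isComp_empty_iff]
      simp [this]
    set M := sources S G
    have hinner : ∀ A ∈ M.powerset.erase ∅,
        ∑ Q ∈ compsRespecting (S \ A) (G.filter fun p => p.1 ∉ A), (-1 : ℤ) ^ (A :: Q).length
          = -(-1) ^ S.card * (-1) ^ A.card := by
      intro A hA
      rw [mem_erase, mem_powerset] at hA
      have hAS : A ⊆ S := hA.2.trans (filter_subset _ _)
      have hGA : ∀ p ∈ G.filter fun p => p.1 ∉ A, p.1 ∈ S \ A ∧ p.2 ∈ S \ A := by
        intro p hp
        rw [mem_filter] at hp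
        exact ⟨mem_sdiff.mpr ⟨(hGS p hp.1).1, hp.2⟩, mem_sdiff.mpr ⟨(hGS p hp.1).2,
          fun h => (mem_filter.mp (hA.2 h)).2 p hp.1 rfl⟩⟩
      have hsq : ((-1 : ℤ) ^ A.card) ^ 2 = 1 := by rw [← pow_mul, mul_comm, pow_mul]; simp
      rw [← card_sdiff_add_card_eq_card hAS]
      simp only [List.length_cons, pow_succ, mul_neg_one, sum_neg_distrib]
      rw [ih (S \ A) (sdiff_ssubset hAS (nonempty_iff_ne_empty.mpr hA.1)) hGA
        fun v h => hacyc v (Relation.TransGen.mono (fun _ _ h => (mem_filter.mp h).1) _ _ h)]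
      linear_combination (-1 : ℤ) ^ (S \ A).card * hsq
    have hM : M.Nonempty := sources_nonempty hS (fun p hp => (hGS p hp).1) hacyc
    simp only [compsRespecting_eq_map_sigma hS, sum_map, sum_sigma, List.consEmbedding_apply]
    rw [sum_congr rfl hinner, ← mul_sum,
      sum_erase_eq_sub (empty_mem_powerset M), sum_powerset_neg_one_pow_card_of_nonempty hM]
    simp

def withPartOrder (G : Finset (α × α)) (V : Finset α) (P : List (Finset α)) : Finset (α × α) :=
  G ∪ (V ×ˢ V).filter fun p => idx P p.1 < idx P p.2

lemma withPartOrder_subset {G : Finset (α × α)} {V : Finset α} (P : List (Finset α))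
    (hGV : ∀ p ∈ G, p.1 ∈ V ∧ p.2 ∈ V) : ∀ p ∈ withPartOrder G V P, p.1 ∈ V ∧ p.2 ∈ V := by
  simp only [withPartOrder, forall_mem_union, mem_filter, mem_product]
  exact ⟨hGV, fun p hp => hp.1⟩

lemma not_transGen_withPartOrder {G : Finset (α × α)} (V : Finset α) {P : List (Finset α)}
    (hno : ∀ p ∈ G, idx P p.1 ≤ idx P p.2)
    (hacyc : ∀ v, ¬ Relation.TransGen (fun u w => (u, w) ∈ G) v v) (v : α) :
    ¬ Relation.TransGen (fun u w => (u, w) ∈ withPartOrder G V P) v v := by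
  intro h
  have hle : (fun u w => (u, w) ∈ withPartOrder G V P) ≤
      fun u w => (u, w) ∈ G ∨ idx P u < idx P w := by
    intro u w huw
    simp only [withPartOrder, mem_union, mem_filter] at huw
    exact huw.imp_right And.right
  exact ((Relation.TransGen.mono hle _ _ h).lt_or_transGen_of_or_lt (idx P)
    fun u w h => hno (u, w) h).elim (lt_irrefl _) (hacyc v)

lemma refines_and_forall_idx_lt_iff {V : Finset α} {P Q : List (Finset α)}
    {G : Finset (α × α)} (hP : IsComp V P) :
    (Refines Q P ∧ ∀ p ∈ G, idx Q p.1 < idx Q p.2) ↔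
      Q ∈ compsRespecting V (withPartOrder G V P) := by
  simp only [refines_iff hP, mem_compsRespecting, withPartOrder, forall_mem_union, mem_filter,
    mem_product, Prod.forall, and_imp]
  tauto

end

/-- Lemma on constrained refinements: for a DAG `G` on `V` and a composition `P` of `V`,
the alternating sum over refinements `Q` of `P` with `Q(v) < Q(v')` for all edges `(v,v')`
is `0` if some edge has `P(v') < P(v)`, and `(-1)^{|V|}` otherwise. -/
theorem stmt_4 {α : Type*} [DecidableEq α] (V : Finset α) (G : Finset (α × α))
    (hGV : ∀ p ∈ G, p.1 ∈ V ∧ p.2 ∈ V)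
    (hacyc : ∀ v : α, ¬ Relation.TransGen (fun u w => (u, w) ∈ G) v v)
    (P : List (Finset α)) (hP : IsComp V P) :
    ((∃ p ∈ G, idx P p.2 < idx P p.1) →
        ∑ᶠ (Q : List (Finset α)) (_ : Refines Q P ∧ ∀ p ∈ G, idx Q p.1 < idx Q p.2),
          ((-1 : ℤ) ^ Q.length) = 0) ∧
    ((¬ ∃ p ∈ G, idx P p.2 < idx P p.1) →
        ∑ᶠ (Q : List (Finset α)) (_ : Refines Q P ∧ ∀ p ∈ G, idx Q p.1 < idx Q p.2),
          ((-1 : ℤ) ^ Q.length) = (-1) ^ V.card) := by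
  constructor
  · rintro ⟨p, hp, hlt⟩
    have hnone : ∀ Q : List (Finset α), ¬ (Refines Q P ∧ ∀ p ∈ G, idx Q p.1 < idx Q p.2) := by
      rintro Q ⟨hQ, hresp⟩
      have := hQ.idx_lt_idx hP (hGV p hp).2 (hGV p hp).1 hlt
      exact absurd (hresp p hp) (by omega)
    simp only [hnone, finsum_false, finsum_zero]
  · intro hno
    push Not at hno
    calc _ = ∑ᶠ Q ∈ (compsRespecting V (withPartOrder G V P) : Set _), (-1 : ℤ) ^ Q.length :=
          finsum_congr fun Q => by rw [mem_coe, ← refines_and_forall_idx_lt_iff hP]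
      _ = (-1) ^ V.card := by
        rw [finsum_mem_coe_finset, sum_neg_one_pow_length_compsRespecting
          (withPartOrder_subset P hGV) (not_transGen_withPartOrder V hno hacyc)]
end

section
/- Let H be a hypergraph on a finite set I (a finite collection of subsets of I) and let n be a natural number. A coloring of H with n colors is a function S : I \to Fin n; an orientation of H is a function f assigning to each edge e one of its vertices (f(e) \in e). Then the colorings S of H in which every nonempty edge has a unique vertex of maximal color are in bijection with pairs (f, S) of an acyclic orientation f and a coloring S such that for every nonempty edge e, f(e) is the unique vertex of e whose color equals the maximum color over e. -/
variable {α : Type*} [DecidableEq α]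

/-- The nonempty edges of the hypergraph `H`. -/
abbrev Edge (H : Finset (Finset α)) := {e : Finset α // e ∈ H ∧ e.Nonempty}

/-- An orientation assigns to each (nonempty) edge one of its vertices. -/
def IsOrientation {H : Finset (Finset α)} (f : Edge H → α) : Prop :=
  ∀ e : Edge H, f e ∈ e.1

/-- A directed cycle: a nonempty list of distinct edges `e₁, …, e_k` with
`f(eᵢ) ∈ e_{i+1} \ {f(e_{i+1})}`, indices mod `k`. -/
def HasCycle {H : Finset (Finset α)} (f : Edge H → α) : Prop :=
  ∃ l : List (Edge H), l ≠ [] ∧ l.Nodup ∧ ∀ i : Fin l.length,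
    f (l.get i) ∈ (l.get ⟨(i.1 + 1) % l.length, Nat.mod_lt _ i.pos⟩).1.1 ∧
    f (l.get i) ≠ f (l.get ⟨(i.1 + 1) % l.length, Nat.mod_lt _ i.pos⟩)

/-- `S` is compatible with `f`: each edge's head has maximal color in the edge. -/
def Compat {H : Finset (Finset α)} {n : ℕ} (f : Edge H → α) (S : α → Fin n) : Prop :=
  ∀ e : Edge H, ∀ v ∈ e.1, S v ≤ S (f e)

/-- `S` is strictly compatible with `f`: each edge's head is the unique vertex of
maximal color in the edge. -/
def StrictCompat {H : Finset (Finset α)} {n : ℕ} (f : Edge H → α) (S : α → Fin n) : Prop :=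
  ∀ e : Edge H, ∀ v ∈ e.1, v ≠ f e → S v < S (f e)

/-- Every nonempty edge of `H` has a unique maximal vertex for the coloring `S`. -/
def UniqMax {n : ℕ} (H : Finset (Finset α)) (S : α → Fin n) : Prop :=
  ∀ e ∈ H, e.Nonempty → ∃! v, v ∈ e ∧ ∀ w ∈ e, S w ≤ S v

lemma no_cycle_of_strictCompat {α : Type*} [DecidableEq α] {H : Finset (Finset α)} {n : ℕ}
    {f : Edge H → α} {S : α → Fin n} (hs : StrictCompat f S) : ¬ HasCycle f := by
  rintro ⟨l, hne, _, hcyc⟩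
  have hpos : 0 < l.length := List.length_pos_iff.mpr hne
  have : Nonempty (Fin l.length) := ⟨⟨0, hpos⟩⟩
  obtain ⟨i, hi⟩ := Finite.exists_max (fun i : Fin l.length => S (f (l.get i)))
  have h1 := hcyc i
  have hlt := hs _ (f (l.get i)) h1.1 h1.2
  exact absurd (hi ⟨(i.1 + 1) % l.length, Nat.mod_lt _ i.pos⟩) (not_le.mpr hlt)

/-- Colorings in which every nonempty edge has a unique maximal vertex correspond
bijectively to strictly compatible pairs (acyclic orientation, coloring): for each
coloring `S`, `S` has the unique-maximal-vertex property iff there is a unique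
acyclic orientation strictly compatible with it. -/
theorem stmt_8 {α : Type*} [Fintype α] [DecidableEq α] (H : Finset (Finset α)) (n : ℕ)
    (S : α → Fin n) :
    UniqMax H S ↔
      ∃! f : Edge H → α, IsOrientation f ∧ ¬ HasCycle f ∧ StrictCompat f S := by
  constructor
  · intro hU
    refine ⟨fun e => (hU e.1 e.2.1 e.2.2).choose, ⟨?_, ?_, ?_⟩, ?_⟩
    · intro e; exact (hU e.1 e.2.1 e.2.2).choose_spec.1.1
    · exact no_cycle_of_strictCompat (fun e v hv hne => by
        have hsp := (hU e.1 e.2.1 e.2.2).choose_spec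
        refine lt_of_le_of_ne (hsp.1.2 v hv) (fun heq => hne ?_)
        exact hsp.2 v ⟨hv, fun w hw => heq ▸ hsp.1.2 w hw⟩)
    · intro e v hv hne
      have hsp := (hU e.1 e.2.1 e.2.2).choose_spec
      refine lt_of_le_of_ne (hsp.1.2 v hv) (fun heq => hne ?_)
      exact hsp.2 v ⟨hv, fun w hw => heq ▸ hsp.1.2 w hw⟩
    · rintro g ⟨hor, -, hsc⟩
      funext e
      have hsp := (hU e.1 e.2.1 e.2.2).choose_spec
      refine hsp.2 (g e) ⟨hor e, fun w hw => ?_⟩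
      rcases eq_or_ne w (g e) with rfl | hne
      · exact le_rfl
      · exact (hsc e w hw hne).le
  · rintro ⟨f, ⟨hor, -, hsc⟩, -⟩ e he hne
    refine ⟨f ⟨e, he, hne⟩, ⟨hor _, fun w hw => ?_⟩, fun v ⟨hv, hmax⟩ => ?_⟩
    · rcases eq_or_ne w (f ⟨e, he, hne⟩) with rfl | h
      · exact le_rfl
      · exact (hsc _ w hw h).le
    · by_contra h
      exact absurd (hmax _ (hor ⟨e, he, hne⟩)) (not_le.mpr (hsc _ v hv h))
end

section
/- Stanley's reciprocity theorem: for a finite simple graph g on vertex set I with chromatic polynomial \chi, and any natural number n, (-1)^{|I|} \chi(-n) equals the number of pairs (f, S) where f is an acyclic orientation of g and S : I \to Fin n is a coloring such that for every edge directed from u to v by f, S(u) \le S(v). -/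
variable {α : Type*} [DecidableEq α]

/-- A proper coloring of a graph: no edge is monochromatic. -/
def Proper {n : ℕ} (H : Finset (Finset α)) (S : α → Fin n) : Prop :=
  ∀ e ∈ H, ∀ u ∈ e, ∀ v ∈ e, u ≠ v → S u ≠ S v

/-!
Directing every edge towards its endpoint of larger colour turns a proper colouring `S` into the
unique orientation `f` with which `S` is strictly compatible, and this `f` is acyclic. Hence
`χ(m) = ∑_f Ω°_f(m)`, summed over the acyclic orientations, where `Ω°_f(m)` counts the colourings
increasing strictly along the arcs of `f`; the theorem reduces to Stanley's reciprocity
`(-1)^|I| Ω°_f(-n) = Ω_f(n)` for the order polynomials of the acyclic relation `f`.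

For that, fix an injective labelling `κ` increasing along the arcs. A colouring `T` amounts to the
listing `w` of the vertices along which `(T, κ)` increases lexicographically, together with the
resulting colour sequence, and `T` is compatible with `f` iff `w` is a linear extension. For fixed
`w` the sequences are counted by `C(n + a, p)`, where `a` is the number of ascents of `κ` along
`w`; for strict colourings `κ` is reversed, giving `C(m + d, p)` with `d` the number of descents.
As `a + d = p - 1`, the identity `(-1)^p C(-n + d, p) = C(n + a, p)` finishes the proof.
-/

open Finset Function OrderDual Polynomial Relation

noncomputable def shiftedChoosePoly (p d : ℕ) : ℚ[X] :=
  C (p.factorial : ℚ)⁻¹ * (descPochhammer ℚ p).comp (X + C (d : ℚ))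

theorem eval_shiftedChoosePoly (p d : ℕ) (x : ℚ) :
    (shiftedChoosePoly p d).eval x = Ring.choose (x + d) p := by
  rw [shiftedChoosePoly, eval_mul, eval_C, eval_comp, eval_add, eval_X, eval_C,
    Ring.choose_eq_smul, smul_eq_mul, ← descPochhammer_map (Int.castRingHom ℚ), eval_map,
    ← aeval_eq_smeval, aeval_def]
  rfl

theorem shiftedChoosePoly_eval_natCast (p d m : ℕ) :
    (shiftedChoosePoly p d).eval (m : ℚ) = (m + d).choose p := by
  rw [eval_shiftedChoosePoly, ← Nat.cast_add, Ring.choose_natCast]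

theorem neg_one_pow_mul_shiftedChoosePoly_eval_neg {p d a : ℕ} (h : d + a + 1 = p) (n : ℕ) :
    (-1) ^ p * (shiftedChoosePoly p d).eval (-n : ℚ) = (n + a).choose p := by
  have hx : (-n : ℚ) + d = -((n - d : ℚ)) := by ring
  have hy : (n - d : ℚ) + p - 1 = ((n + a : ℕ) : ℚ) := by push_cast [← h]; ring
  rw [eval_shiftedChoosePoly, hx, Ring.choose_neg, hy, Ring.choose_natCast, Units.smul_def,
    zsmul_eq_mul, Int.cast_negOnePow_natCast, ← mul_assoc, ← mul_pow]
  norm_num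

theorem card_strictMono_fin (k N : ℕ) :
    Nat.card {y : Fin k → Fin N // StrictMono y} = N.choose k := by
  let e : {y : Fin k → Fin N // StrictMono y} ≃
      {s : Finset (Fin N) // s ∈ univ.powersetCard k} :=
    { toFun y := ⟨univ.image y.1, by
        rw [mem_powersetCard_univ, card_image_of_injective _ y.2.injective, card_univ,
          Fintype.card_fin]⟩
      invFun s := ⟨s.1.orderEmbOfFin (mem_powersetCard_univ.1 s.2),
        (s.1.orderEmbOfFin _).strictMono⟩
      left_inv y := Subtype.ext
        (orderEmbOfFin_unique _ (fun i => mem_image_of_mem _ (mem_univ i)) y.2).symm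
      right_inv s := Subtype.ext <| coe_injective <| by
        rw [coe_image, coe_univ, Set.image_univ, range_orderEmbOfFin] }
  rw [Nat.card_congr e, Nat.card_eq_fintype_card, Fintype.card_coe, card_powersetCard, card_univ,
    Fintype.card_fin]

theorem Fin.monotone_sub_of_strictMono {q : ℕ} {y : Fin (q + 1) → ℕ} (hy : StrictMono y) :
    Monotone fun i : Fin (q + 1) => (y i : ℤ) - i :=
  Fin.monotone_iff_le_succ.2 fun i => by
    have := Fin.strictMono_iff_lt_succ.1 hy i
    simp only [Fin.val_castSucc, Fin.val_succ]
    omega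

theorem card_strictMono_add {q n : ℕ} (c : Fin (q + 1) → ℕ) (hc0 : c 0 = 0)
    (hc : ∀ i : Fin q, c i.castSucc ≤ c i.succ ∧ c i.succ ≤ c i.castSucc + 1) :
    Nat.card {x : Fin (q + 1) → Fin n // StrictMono fun i => (x i : ℕ) + c i} =
      (n + c (Fin.last q)).choose (q + 1) := by
  have hc_mono : Monotone c := Fin.monotone_iff_le_succ.2 fun i => (hc i).1
  have hc_lip : Monotone fun i : Fin (q + 1) => (i : ℤ) - c i :=
    Fin.monotone_iff_le_succ.2 fun i => by
      have := (hc i).2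
      simp only [Fin.val_castSucc, Fin.val_succ]
      omega
  have hc_le (i : Fin (q + 1)) : c i ≤ i := by
    have := hc_lip (Fin.zero_le i)
    simp [hc0] at this
    omega
  have hc_last (i : Fin (q + 1)) : c (Fin.last q) ≤ c i + (q - i) := by
    have := hc_lip (Fin.le_last i)
    simp at this
    omega
  have hy_bounds (y : Fin (q + 1) → Fin (n + c (Fin.last q))) (hy : StrictMono y)
      (i : Fin (q + 1)) : (i : ℕ) ≤ y i ∧ (y i : ℕ) < n + c i := by
    have hmono := Fin.monotone_sub_of_strictMono (y := fun i => (y i : ℕ)) hy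
    have h0 := hmono (Fin.zero_le i)
    have hl := hmono (Fin.le_last i)
    have := (y (Fin.last q)).isLt
    have := hc_last i
    simp at h0 hl
    omega
  let e : {x : Fin (q + 1) → Fin n // StrictMono fun i => (x i : ℕ) + c i} ≃
      {y : Fin (q + 1) → Fin (n + c (Fin.last q)) // StrictMono y} :=
    { toFun x := ⟨fun i => ⟨x.1 i + c i, by
          have := (x.1 i).isLt
          have := hc_mono (Fin.le_last i)
          omega⟩,
        fun i j hij => Fin.mk_lt_mk.2 (x.2 hij)⟩
      invFun y := ⟨fun i => ⟨y.1 i - c i, by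
          have := hy_bounds y.1 y.2 i
          have := hc_le i
          omega⟩,
        fun i j hij => by
          have := y.2 hij
          have := hy_bounds y.1 y.2 i
          have := hy_bounds y.1 y.2 j
          have := hc_le i
          have := hc_le j
          simp only [Fin.lt_def] at *
          omega⟩
      left_inv x := by ext i; simp
      right_inv y := by
        ext i
        have := hy_bounds y.1 y.2 i
        have := hc_le i
        simp only
        omega }
  rw [Nat.card_congr e, card_strictMono_fin]

section Ascents
variable {γ : Type*} [LinearOrder γ] {q : ℕ}

def ascentsBelow (g : Fin (q + 1) → γ) : Fin (q + 1) → ℕ :=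
  Fin.induction 0 fun i c => c + if g i.castSucc < g i.succ then 1 else 0

def ascents (g : Fin (q + 1) → γ) : ℕ := ascentsBelow g (Fin.last q)

theorem ascentsBelow_zero (g : Fin (q + 1) → γ) : ascentsBelow g 0 = 0 := rfl

theorem ascentsBelow_succ (g : Fin (q + 1) → γ) (i : Fin q) :
    ascentsBelow g i.succ =
      ascentsBelow g i.castSucc + if g i.castSucc < g i.succ then 1 else 0 :=
  rfl

theorem strictMono_toLex_iff {n : ℕ} (x : Fin (q + 1) → Fin n) (g : Fin (q + 1) → γ) :
    StrictMono (fun i => toLex (x i, g i)) ↔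
      StrictMono fun i => (x i : ℕ) + ascentsBelow g i := by
  simp only [Fin.strictMono_iff_lt_succ, Prod.Lex.toLex_lt_toLex, ascentsBelow_succ, Fin.lt_def,
    ← Fin.val_inj]
  refine forall_congr' fun i => ?_
  by_cases h : g i.castSucc < g i.succ <;>
    simp only [h, if_true, if_false, and_true, and_false, or_false] <;> omega

theorem ascentsBelow_add_ascentsBelow_toDual {g : Fin (q + 1) → γ} (hg : Injective g)
    (i : Fin (q + 1)) :
    ascentsBelow g i + ascentsBelow (toDual ∘ g : Fin (q + 1) → γᵒᵈ) i = i := by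
  induction i using Fin.induction with
  | zero => rfl
  | succ i ih =>
    have hne : g i.castSucc ≠ g i.succ := hg.ne Fin.castSucc_lt_succ.ne
    simp only [ascentsBelow_succ, comp_apply, toDual_lt_toDual, Fin.val_succ,
      Fin.val_castSucc] at ih ⊢
    rcases hne.lt_or_gt with h | h
    · simp [h, h.not_gt]; omega
    · simp [h, h.not_gt]; omega

theorem ascents_add_ascents_toDual {g : Fin (q + 1) → γ} (hg : Injective g) :
    ascents g + ascents (toDual ∘ g : Fin (q + 1) → γᵒᵈ) = q :=
  ascentsBelow_add_ascentsBelow_toDual hg (Fin.last q)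

theorem card_strictMono_toLex (g : Fin (q + 1) → γ) (n : ℕ) :
    Nat.card {x : Fin (q + 1) → Fin n // StrictMono fun i => toLex (x i, g i)} =
      (n + ascents g).choose (q + 1) := by
  rw [Nat.card_congr (Equiv.subtypeEquivRight fun x => strictMono_toLex_iff x g)]
  refine card_strictMono_add _ (ascentsBelow_zero g) fun i => ?_
  rw [ascentsBelow_succ]
  split_ifs <;> omega

end Ascents

section Sorting
variable {ι β γ : Type*} [Fintype ι] [LinearOrder β] [LinearOrder γ] {p : ℕ}

theorem existsUnique_equiv_strictMono (hp : Fintype.card ι = p) {κ : ι → γ}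
    (hκ : Injective κ) : ∃! w : Fin p ≃ ι, StrictMono (κ ∘ w) := by
  let : LinearOrder ι := LinearOrder.lift' κ hκ
  have hsorted : StrictMono (κ ∘ monoEquivOfFin ι hp) :=
    (show StrictMono κ from fun _ _ h => h).comp (monoEquivOfFin ι hp).strictMono
  refine ⟨(monoEquivOfFin ι hp).toEquiv, hsorted, fun w hw => Equiv.ext fun i => hκ ?_⟩
  refine congrFun ((StrictMono.range_inj hw hsorted).1 ?_) i
  simp only [Set.range_comp, Equiv.range_eq_univ, OrderIso.range_eq]

theorem card_eq_sum_card_toLex [DecidableEq ι] [Finite β] (hp : Fintype.card ι = p)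
    {κ : ι → γ} (hκ : Injective κ) (P : (ι → β) → Prop) :
    Nat.card {T : ι → β // P T} = ∑ w : Fin p ≃ ι,
      Nat.card {x : Fin p → β // StrictMono (fun i => toLex (x i, κ (w i))) ∧ P (x ∘ w.symm)} := by
  have sorts (T : ι → β) : ∃! w : Fin p ≃ ι, StrictMono fun i => toLex (T (w i), κ (w i)) :=
    existsUnique_equiv_strictMono hp (κ := fun a => toLex (T a, κ a))
      fun a b h => hκ (congrArg (fun z => (ofLex z).2) h)
  rw [← Nat.card_sigma]
  refine (Nat.card_congr (Equiv.ofBijective (fun s => ⟨s.2.1 ∘ s.1.symm, s.2.2.2⟩) ⟨?_, ?_⟩)).symm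
  · rintro ⟨w₁, x₁, h₁, _⟩ ⟨w₂, x₂, h₂, _⟩ h
    have hT : x₁ ∘ w₁.symm = x₂ ∘ w₂.symm := congrArg Subtype.val h
    obtain rfl : w₁ = w₂ := (sorts (x₁ ∘ w₁.symm)).unique (by simpa using h₁)
      (by rw [hT]; simpa using h₂)
    obtain rfl : x₁ = x₂ := by simpa [Function.comp_assoc] using congrArg (· ∘ w₁) hT
    rfl
  · rintro ⟨T, hT⟩
    obtain ⟨w, hw, -⟩ := sorts T
    exact ⟨⟨w, T ∘ w, hw, by simpa [Function.comp_assoc] using hT⟩,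
      Subtype.ext (by simp [Function.comp_assoc])⟩

end Sorting

section OrderPolynomial
variable {ι γ : Type*} [Fintype ι] [LinearOrder γ] {p : ℕ}

def IsLinearExtension (r : ι → ι → Prop) (w : Fin p ≃ ι) : Prop :=
  ∀ u v, r u v → w.symm u < w.symm v

theorem le_iff_lt_of_strictMono_toLex {β : Type*} [LinearOrder β] {x : Fin p → β}
    {g : Fin p → γ} (h : StrictMono fun i => toLex (x i, g i)) {i j : Fin p} (hg : g i < g j) :
    x i ≤ x j ↔ i < j := by
  rw [← h.lt_iff_lt, Prod.Lex.toLex_lt_toLex, le_iff_lt_or_eq]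
  simp [hg]

theorem lt_iff_lt_of_strictMono_toLex {β : Type*} [LinearOrder β] {x : Fin p → β}
    {g : Fin p → γ} (h : StrictMono fun i => toLex (x i, g i)) {i j : Fin p} (hg : g j < g i) :
    x i < x j ↔ i < j := by
  rw [← h.lt_iff_lt, Prod.Lex.toLex_lt_toLex]
  simp [hg.not_gt]

theorem exists_injective_strictMono_of_acyclic {r : ι → ι → Prop}
    (hr : ∀ a, ¬ TransGen r a a) :
    ∃ κ : ι → ℕ ×ₗ ℕ, Injective κ ∧ ∀ a b, r a b → κ a < κ b := by
  classical
  refine ⟨fun a => toLex (#{c | TransGen r c a}, Fintype.equivFin ι a), fun a b h => ?_,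
    fun a b hab => Prod.Lex.toLex_lt_toLex.2 (Or.inl (card_lt_card ?_))⟩
  · simpa [Fin.val_inj] using congrArg (fun z => (ofLex z).2) h
  · refine ssubset_iff_of_subset (fun c hc => ?_) |>.2 ⟨a, ?_, ?_⟩
    · simp only [mem_filter, mem_univ, true_and] at hc ⊢
      exact hc.tail hab
    · simpa using TransGen.single hab
    · simpa using hr a

open scoped Classical in
theorem card_relMonotone_eq_sum [DecidableEq ι] {r : ι → ι → Prop} {κ : ι → γ}
    (hκ : Injective κ) (hr : ∀ u v, r u v → κ u < κ v) {q : ℕ} (hq : Fintype.card ι = q + 1)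
    (n : ℕ) :
    Nat.card {S : ι → Fin n // ∀ u v, r u v → S u ≤ S v} =
      ∑ w : Fin (q + 1) ≃ ι with IsLinearExtension r w, (n + ascents (κ ∘ w)).choose (q + 1) := by
  rw [card_eq_sum_card_toLex hq hκ, sum_filter]
  refine sum_congr rfl fun w _ => ?_
  have hcompat (x : Fin (q + 1) → Fin n) (hx : StrictMono fun i => toLex (x i, κ (w i))) :
      (∀ u v, r u v → (x ∘ w.symm) u ≤ (x ∘ w.symm) v) ↔ IsLinearExtension r w :=
    forall₂_congr fun u v => imp_congr_right fun huv =>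
      le_iff_lt_of_strictMono_toLex hx (by simpa using hr u v huv)
  rw [Nat.card_congr (Equiv.subtypeEquivRight fun x => and_congr_right (hcompat x))]
  split_ifs with hw
  · simpa [hw] using card_strictMono_toLex (κ ∘ w) n
  · simp [hw]

open scoped Classical in
theorem card_relStrictMono_eq_sum [DecidableEq ι] {r : ι → ι → Prop} {κ : ι → γ}
    (hκ : Injective κ) (hr : ∀ u v, r u v → κ u < κ v) {q : ℕ} (hq : Fintype.card ι = q + 1)
    (m : ℕ) :
    Nat.card {S : ι → Fin m // ∀ u v, r u v → S u < S v} =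
      ∑ w : Fin (q + 1) ≃ ι with IsLinearExtension r w,
        (m + ascents (toDual ∘ κ ∘ w)).choose (q + 1) := by
  rw [card_eq_sum_card_toLex hq (κ := toDual ∘ κ) (toDual.injective.comp hκ), sum_filter]
  refine sum_congr rfl fun w _ => ?_
  have hcompat (x : Fin (q + 1) → Fin m)
      (hx : StrictMono fun i => toLex (x i, (toDual ∘ κ) (w i))) :
      (∀ u v, r u v → (x ∘ w.symm) u < (x ∘ w.symm) v) ↔ IsLinearExtension r w :=
    forall₂_congr fun u v => imp_congr_right fun huv =>
      lt_iff_lt_of_strictMono_toLex hx (by simpa using hr u v huv)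
  rw [Nat.card_congr (Equiv.subtypeEquivRight fun x => and_congr_right (hcompat x))]
  split_ifs with hw
  · simpa [hw] using card_strictMono_toLex (toDual ∘ κ ∘ w) m
  · simp [hw]

theorem exists_orderPolynomial {r : ι → ι → Prop} (hr : ∀ a, ¬ TransGen r a a) :
    ∃ P : ℚ[X],
      (∀ m : ℕ, P.eval (m : ℚ) = Nat.card {S : ι → Fin m // ∀ u v, r u v → S u < S v}) ∧
      ∀ n : ℕ, (-1) ^ Fintype.card ι * P.eval (-n : ℚ) =
        Nat.card {S : ι → Fin n // ∀ u v, r u v → S u ≤ S v} := by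
  classical
  obtain ⟨κ, hκ, hrκ⟩ := exists_injective_strictMono_of_acyclic hr
  cases hq : Fintype.card ι with
  | zero =>
    have : IsEmpty ι := Fintype.card_eq_zero_iff.1 hq
    refine ⟨1, fun m => ?_, fun n => ?_⟩ <;> simp
  | succ q =>
    refine ⟨∑ w : Fin (q + 1) ≃ ι with IsLinearExtension r w,
      shiftedChoosePoly (q + 1) (ascents (toDual ∘ κ ∘ w)), fun m => ?_, fun n => ?_⟩
    · rw [card_relStrictMono_eq_sum hκ hrκ hq, eval_finsetSum]
      push_cast
      exact sum_congr rfl fun w _ => shiftedChoosePoly_eval_natCast _ _ _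
    · rw [card_relMonotone_eq_sum hκ hrκ hq, eval_finsetSum, mul_sum]
      push_cast
      refine sum_congr rfl fun w _ => neg_one_pow_mul_shiftedChoosePoly_eval_neg ?_ n
      have := ascents_add_ascents_toDual (hκ.comp w.injective)
      omega

end OrderPolynomial

section ClosedWalk
variable {ι : Type*} {r : ι → ι → Prop}

theorem exists_walk_of_transGen {a b : ι} (h : TransGen r a b) :
    ∃ k ≥ 1, ∃ g : ℕ → ι, g 0 = a ∧ g k = b ∧ ∀ i < k, r (g i) (g (i + 1)) := by
  induction h with
  | @single b hab =>
    refine ⟨1, le_rfl, fun i => if i = 0 then a else b, rfl, rfl, fun i hi => ?_⟩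
    obtain rfl : i = 0 := by omega
    simpa using hab
  | @tail b c _ hbc ih =>
    obtain ⟨k, hk, g, hg0, hgk, hstep⟩ := ih
    refine ⟨k + 1, by omega, fun i => if i = k + 1 then c else g i, by simpa using hg0, by simp,
      fun i hi => ?_⟩
    rcases Nat.lt_or_ge i k with hik | hik
    · simpa [show i ≠ k + 1 by omega, show i ≠ k by omega] using hstep i hik
    · obtain rfl : i = k := by omega
      simpa [hgk] using hbc

/-- A shortest closed walk through `a` has no repeated vertex. -/
theorem exists_closedWalk_injOn_of_transGen {a : ι} (h : TransGen r a a) :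
    ∃ k ≥ 1, ∃ g : ℕ → ι, g 0 = g k ∧ (∀ i < k, r (g i) (g (i + 1))) ∧
      Set.InjOn g (Set.Icc 1 k) := by
  classical
  have hex : ∃ k, 1 ≤ k ∧ ∃ g : ℕ → ι, g 0 = g k ∧ ∀ i < k, r (g i) (g (i + 1)) := by
    obtain ⟨k, hk, g, hg0, hgk, hstep⟩ := exists_walk_of_transGen h
    exact ⟨k, hk, g, hg0.trans hgk.symm, hstep⟩
  obtain ⟨hk, g, hg0, hstep⟩ := Nat.find_spec hex
  have hne : ∀ i j, 1 ≤ i → i < j → j ≤ Nat.find hex → g i ≠ g j := fun i j hi hij hj hgij =>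
    Nat.find_min hex (m := j - i) (by omega)
      ⟨by omega, fun t => g (i + t), by simpa [Nat.add_sub_cancel' hij.le] using hgij,
        fun t ht => by simpa [← add_assoc] using hstep (i + t) (by omega)⟩
  refine ⟨_, hk, g, hg0, hstep, fun i hi j hj hgij => ?_⟩
  by_contra hij
  rcases Nat.lt_or_gt_of_ne hij with hlt | hlt
  · exact hne i j hi.1 hlt hj.2 hgij
  · exact hne j i hj.1 hlt hi.2 hgij.symm

end ClosedWalk

section Orientation
variable {V : Type*} {H : Finset (Finset V)} {m : ℕ}

def Arc (f : Edge H → V) (u v : V) : Prop :=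
  ∃ e : Edge H, u ∈ e.1 ∧ f e = v ∧ u ≠ v

theorem compat_iff_forall_arc (f : Edge H → V) (S : V → Fin m) :
    Compat f S ↔ ∀ u v, Arc f u v → S u ≤ S v := by
  refine ⟨fun h _ _ ⟨e, hu, hv, _⟩ => hv ▸ h e _ hu, fun h e v hv => ?_⟩
  by_cases hne : v = f e
  · exact hne ▸ le_rfl
  · exact h v (f e) ⟨e, hv, rfl, hne⟩

theorem strictCompat_iff_forall_arc (f : Edge H → V) (S : V → Fin m) :
    StrictCompat f S ↔ ∀ u v, Arc f u v → S u < S v :=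
  ⟨fun h _ _ ⟨e, hu, hv, hne⟩ => hv ▸ h e _ hu (hv ▸ hne),
    fun h e v hv hne => h v (f e) ⟨e, hv, rfl, hne⟩⟩

theorem hasCycle_of_closedWalk {f : Edge H → V} {k : ℕ} (hk : 1 ≤ k) {g : ℕ → V}
    (hg0 : g 0 = g k) (hstep : ∀ i < k, Arc f (g i) (g (i + 1)))
    (hinj : Set.InjOn g (Set.Icc 1 k)) : HasCycle f := by
  choose E hmem hhead hne using hstep
  have hnext (i : Fin k) : g ((i + 1) % k) = g (i + 1) := by
    rcases (Nat.succ_le_of_lt i.2).lt_or_eq with hlt | heq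
    · rw [Nat.mod_eq_of_lt hlt]
    · rw [show (i : ℕ) + 1 = k from heq, Nat.mod_self, hg0]
  have hinjE : Injective fun i : Fin k => E i i.2 := fun i j hij => by
    have hfij := congrArg f hij
    rw [hhead, hhead] at hfij
    have := hinj ⟨by omega, i.2⟩ ⟨by omega, j.2⟩ hfij
    exact Fin.ext (by omega)
  refine ⟨List.ofFn fun i : Fin k => E i i.2, by simpa using (by omega : k ≠ 0),
    List.nodup_ofFn.2 hinjE, fun i => ?_⟩
  simp only [List.get_ofFn, Fin.val_cast, List.length_ofFn, hhead]
  have hi : (i : ℕ) < k := by simpa using i.2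
  have hj : ((i : ℕ) + 1) % k < k := Nat.mod_lt _ (by omega)
  rw [← hnext ⟨i, hi⟩]
  exact ⟨hmem _ hj, hne _ hj⟩

theorem not_transGen_arc_self {f : Edge H → V} (hf : ¬ HasCycle f) (a : V) :
    ¬ TransGen (Arc f) a a := fun h =>
  let ⟨_, hk, _, hg0, hstep, hinj⟩ := exists_closedWalk_injOn_of_transGen h
  hf (hasCycle_of_closedWalk hk hg0 hstep hinj)

theorem not_hasCycle_of_strictCompat {f : Edge H → V} {S : V → Fin m} (hS : StrictCompat f S) :
    ¬ HasCycle f := by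
  rintro ⟨l, hl, -, hcyc⟩
  have : Nonempty (Fin l.length) := ⟨⟨0, List.length_pos_iff.2 hl⟩⟩
  obtain ⟨i, hi⟩ := Finite.exists_max fun i => S (f (l.get i))
  exact (hi _).not_gt (hS _ _ (hcyc i).1 (hcyc i).2)

theorem exists_orientationPolynomial [Fintype V] {f : Edge H → V} (hf : ¬ HasCycle f) :
    ∃ P : ℚ[X], (∀ m : ℕ, P.eval (m : ℚ) = Nat.card {S : V → Fin m // StrictCompat f S}) ∧
      ∀ n : ℕ, (-1) ^ Fintype.card V * P.eval (-n : ℚ) =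
        Nat.card {S : V → Fin n // Compat f S} := by
  simp_rw [strictCompat_iff_forall_arc, compat_iff_forall_arc]
  exact exists_orderPolynomial (not_transGen_arc_self hf)

theorem exists_strictCompat_of_proper {S : V → Fin m} (hS : Proper H S) :
    ∃ f : Edge H → V, IsOrientation f ∧ StrictCompat f S := by
  choose f hf using fun e : Edge H => e.1.exists_max_image S e.2.2
  exact ⟨f, fun e => (hf e).1, fun e v hv hne =>
    ((hf e).2 v hv).lt_of_ne (hS e.1 e.2.1 v hv (f e) (hf e).1 hne)⟩

theorem eq_of_strictCompat {f f' : Edge H → V} {S : V → Fin m} (hf : IsOrientation f)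
    (hf' : IsOrientation f') (h : StrictCompat f S) (h' : StrictCompat f' S) : f = f' := by
  funext e
  by_contra hne
  exact lt_asymm (h e _ (hf' e) (Ne.symm hne)) (h' e _ (hf e) hne)

theorem proper_of_strictCompat (h2 : ∀ e ∈ H, e.card ≤ 2) {f : Edge H → V} {S : V → Fin m}
    (hf : IsOrientation f) (h : StrictCompat f S) : Proper H S := by
  classical
  intro e he u hu v hv huv hSuv
  let ed : Edge H := ⟨e, he, u, hu⟩
  have hhead : f ed = u ∨ f ed = v := by
    by_contra! hne
    have := card_le_card (s := {u, v, f ed}) (t := e)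
      (insert_subset hu (insert_subset hv (singleton_subset_iff.2 (hf ed))))
    rw [card_eq_three.2 ⟨u, v, f ed, huv, hne.1.symm, hne.2.symm, rfl⟩] at this
    linarith [h2 e he]
  rcases hhead with hfu | hfv
  · exact (h ed v hv (hfu ▸ huv.symm)).ne (by rw [hfu, hSuv])
  · exact (h ed u hu (hfv ▸ huv)).ne (by rw [hfv, hSuv])

theorem card_proper_eq_card_strictCompat (h2 : ∀ e ∈ H, e.card ≤ 2) (m : ℕ) :
    Nat.card {S : V → Fin m // Proper H S} = Nat.card {q : (Edge H → V) × (V → Fin m) //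
      IsOrientation q.1 ∧ ¬ HasCycle q.1 ∧ StrictCompat q.1 q.2} := by
  refine (Nat.card_congr (Equiv.ofBijective
    (fun q => ⟨q.1.2, proper_of_strictCompat h2 q.2.1 q.2.2.2⟩) ⟨?_, ?_⟩)).symm
  · rintro ⟨⟨f, S⟩, hf, _, hS⟩ ⟨⟨f', S'⟩, hf', _, hS'⟩ h
    obtain rfl : S = S' := congrArg Subtype.val h
    obtain rfl := eq_of_strictCompat hf hf' hS hS'
    rfl
  · rintro ⟨S, hS⟩
    obtain ⟨f, hf, hfS⟩ := exists_strictCompat_of_proper hS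
    exact ⟨⟨(f, S), hf, not_hasCycle_of_strictCompat hfS, hfS⟩, rfl⟩

open scoped Classical in
theorem card_acyclicPairs_eq_sum [Fintype V] (R : (Edge H → V) → (V → Fin m) → Prop) :
    Nat.card {q : (Edge H → V) × (V → Fin m) // IsOrientation q.1 ∧ ¬ HasCycle q.1 ∧ R q.1 q.2} =
      ∑ f : {f : Edge H → V // IsOrientation f ∧ ¬ HasCycle f}, Nat.card {S // R f S} := by
  rw [← Nat.card_sigma]
  exact Nat.card_congr
    { toFun q := ⟨⟨q.1.1, q.2.1, q.2.2.1⟩, q.1.2, q.2.2.2⟩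
      invFun s := ⟨(s.1.1, s.2.1), s.1.2.1, s.1.2.2, s.2.2⟩
      left_inv _ := rfl
      right_inv _ := rfl }

end Orientation

theorem stmt_13_general {α : Type*} [Fintype α] (H : Finset (Finset α))
    (h2 : ∀ e ∈ H, e.card = 2) (χ : Polynomial ℚ)
    (hχ : ∀ m : ℕ, χ.eval (m : ℚ) = Nat.card {S : α → Fin m // Proper H S}) (n : ℕ) :
    (-1 : ℚ) ^ Fintype.card α * χ.eval (-(n : ℚ)) =
      Nat.card {p : (Edge H → α) × (α → Fin n) //
        IsOrientation p.1 ∧ ¬ HasCycle p.1 ∧ Compat p.1 p.2} := by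
  classical
  choose P hP using fun f : {f : Edge H → α // IsOrientation f ∧ ¬ HasCycle f} =>
    exists_orientationPolynomial f.2.2
  have hχP : χ = ∑ f, P f := by
    refine eq_of_infinite_eval_eq _ _
      (Set.infinite_of_injective_forall_mem Nat.cast_injective fun m => ?_)
    simp only [Set.mem_ofPred_eq, eval_finsetSum, (hP _).1, hχ,
      card_proper_eq_card_strictCompat (fun e he => (h2 e he).le), card_acyclicPairs_eq_sum]
    push_cast
    rfl
  rw [hχP, eval_finsetSum, mul_sum, card_acyclicPairs_eq_sum]
  push_cast
  exact sum_congr rfl fun f _ => (hP f).2 n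

/-- Stanley's reciprocity theorem: `(-1)^{|I|} χ(-n)` counts compatible pairs of
acyclic orientations and colorings with `n` colors. -/
theorem stmt_13 {α : Type*} [Fintype α] [DecidableEq α] (H : Finset (Finset α))
    (h2 : ∀ e ∈ H, e.card = 2) (χ : Polynomial ℚ)
    (hχ : ∀ m : ℕ, χ.eval (m : ℚ) = Nat.card {S : α → Fin m // Proper H S}) (n : ℕ) :
    (-1 : ℚ) ^ Fintype.card α * χ.eval (-(n : ℚ)) =
      Nat.card {p : (Edge H → α) × (α → Fin n) //
        IsOrientation p.1 ∧ ¬ HasCycle p.1 ∧ Compat p.1 p.2} :=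
  stmt_13_general H h2 χ hχ n
end
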